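/- (Lemma 2: normal-normal obfuscation.) Let σ_X, σ_Y > 0, let g be the N(0, σ_X²) density and f the N(0, σ_Y²) density, and for z ∈ ℝ, ε > 0 set M_{z,ε} = (∫_{-εσ_X}^{εσ_X} g(z-x) f(x) dx)/(∫_{-∞}^{∞} g(z-x) f(x) dx). Then for every δ ∈ (0,1), the set {ε > 0 : sup_{z ∈ ℝ} M_{z,ε} ≥ δ} has a minimum, and this minimum equals μ = τ_{(1+δ)/2} / √(1 + σ_X²/σ_Y²), where τ_p = Φ^{-1}(p) is the p-th quantile of the standard normal distribution. -/

import Mathlib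

open MeasureTheory

/-- The standard normal cumulative distribution function `Φ`. -/
noncomputable def stdNormalCDF (z : ℝ) : ℝ :=
  ∫ x in Set.Iic z, Real.exp (-x ^ 2 / 2) / Real.sqrt (2 * Real.pi)

noncomputable def stdφ (x : ℝ) : ℝ := Real.exp (-x ^ 2 / 2) / Real.sqrt (2 * Real.pi)

lemma stdφ_pos (x : ℝ) : 0 < stdφ x := by
  have h : 0 < Real.sqrt (2 * Real.pi) := Real.sqrt_pos.2 (by positivity)
  exact div_pos (Real.exp_pos _) h

lemma stdφ_cont : Continuous stdφ := by
  unfold stdφ; fun_prop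

lemma stdφ_integrable : Integrable stdφ := by
  have h : Integrable (fun x : ℝ => Real.exp (-(1/2 : ℝ) * x ^ 2)) :=
    integrable_exp_neg_mul_sq (by norm_num)
  have := h.div_const (Real.sqrt (2 * Real.pi))
  refine this.congr (Filter.Eventually.of_forall fun x => ?_)
  unfold stdφ; ring_nf

lemma stdφ_integral : ∫ x : ℝ, stdφ x = 1 := by
  have h : ∫ x : ℝ, Real.exp (-(1/2 : ℝ) * x ^ 2) = Real.sqrt (Real.pi / (1/2)) :=
    integral_gaussian (1/2)
  have heq : ∀ x : ℝ, stdφ x = Real.exp (-(1/2 : ℝ) * x ^ 2) / Real.sqrt (2 * Real.pi) := by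
    intro x; unfold stdφ; ring_nf
  calc ∫ x : ℝ, stdφ x = ∫ x : ℝ, Real.exp (-(1/2 : ℝ) * x ^ 2) / Real.sqrt (2 * Real.pi) := by
        simp_rw [heq]
    _ = Real.sqrt (Real.pi / (1/2)) / Real.sqrt (2 * Real.pi) := by
        rw [integral_div, h]
    _ = 1 := by
        rw [show Real.pi / (1/2) = 2 * Real.pi by ring, div_self (by positivity)]

lemma stdNormalCDF_eq (z : ℝ) : stdNormalCDF z = ∫ x in Set.Iic z, stdφ x := rfl

lemma stdNormalCDF_sub (a b : ℝ) :
    stdNormalCDF b - stdNormalCDF a = ∫ x in a..b, stdφ x := by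
  rw [stdNormalCDF_eq, stdNormalCDF_eq]
  exact intervalIntegral.integral_Iic_sub_Iic stdφ_integrable.integrableOn stdφ_integrable.integrableOn

lemma stdNormalCDF_strictMono : StrictMono stdNormalCDF := by
  intro a b hab
  have h : 0 < ∫ x in a..b, stdφ x :=
    intervalIntegral.intervalIntegral_pos_of_pos (stdφ_cont.intervalIntegrable a b) stdφ_pos hab
  have := stdNormalCDF_sub a b
  linarith

lemma stdNormalCDF_neg (a : ℝ) : stdNormalCDF (-a) = 1 - stdNormalCDF a := by
  have heven : ∀ x : ℝ, stdφ (-x) = stdφ x := by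
    intro x; unfold stdφ; norm_num
  have h1 : ∫ x in Set.Iic (-a), stdφ x = ∫ x in Set.Ioi a, stdφ x := by
    have h := integral_comp_neg_Iic (-a) stdφ
    simp only [neg_neg, heven] at h
    exact h
  have h2 : (∫ x in Set.Iic a, stdφ x) + ∫ x in Set.Ioi a, stdφ x = 1 := by
    rw [intervalIntegral.integral_Iic_add_Ioi stdφ_integrable.integrableOn
      stdφ_integrable.integrableOn, stdφ_integral]
  rw [stdNormalCDF_eq, stdNormalCDF_eq, h1]
  linarith

lemma stdNormalCDF_zero : stdNormalCDF 0 = 1/2 := by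
  have := stdNormalCDF_neg 0
  rw [neg_zero] at this; linarith

lemma shift_aux (a t : ℝ) (ha : 0 ≤ a) (ht : 0 ≤ t) :
    stdNormalCDF (a - t) - stdNormalCDF (-a - t) ≤ stdNormalCDF a - stdNormalCDF (-a) := by
  have e1 : stdNormalCDF (-a - t) = 1 - stdNormalCDF (a + t) := by
    rw [show -a - t = -(a + t) by ring, stdNormalCDF_neg]
  have e2 : stdNormalCDF (-a) = 1 - stdNormalCDF a := stdNormalCDF_neg a
  have h1 : stdNormalCDF (a + t) - stdNormalCDF a = ∫ x in a..(a + t), stdφ x :=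
    stdNormalCDF_sub a (a + t)
  have h2 : stdNormalCDF a - stdNormalCDF (a - t) = ∫ x in (a - t)..a, stdφ x :=
    stdNormalCDF_sub (a - t) a
  have hsub : (∫ x in (a - t)..a, stdφ (2 * a - x)) = ∫ x in a..(a + t), stdφ x := by
    rw [intervalIntegral.integral_comp_sub_left stdφ (2 * a)]
    norm_num
    ring_nf
  have hmono : (∫ x in (a - t)..a, stdφ (2 * a - x)) ≤ ∫ x in (a - t)..a, stdφ x := by
    apply intervalIntegral.integral_mono_on (by linarith)
    · exact ((stdφ_cont.comp (continuous_const.sub continuous_id)).intervalIntegrable _ _)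
    · exact stdφ_cont.intervalIntegrable _ _
    · intro x hx
      unfold stdφ
      have h2π : 0 < Real.sqrt (2 * Real.pi) := Real.sqrt_pos.2 (by positivity)
      rw [div_le_div_iff_of_pos_right h2π]
      exact Real.exp_le_exp.2 (by rw [div_le_div_iff_of_pos_right (by norm_num : (0:ℝ) < 2)]; nlinarith [hx.1, hx.2])
  linarith

lemma shift_le (a t : ℝ) (ha : 0 ≤ a) :
    stdNormalCDF (a - t) - stdNormalCDF (-a - t) ≤ stdNormalCDF a - stdNormalCDF (-a) := by
  rcases le_or_gt 0 t with ht | ht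
  · exact shift_aux a t ha ht
  · have h2 := shift_aux a (-t) ha (by linarith)
    simp only [sub_neg_eq_add] at h2
    have e1 : stdNormalCDF (a - t) = 1 - stdNormalCDF (t - a) := by
      rw [show a - t = -(t - a) by ring, stdNormalCDF_neg]
    have e2 : stdNormalCDF (-a - t) = 1 - stdNormalCDF (a + t) := by
      rw [show -a - t = -(a + t) by ring, stdNormalCDF_neg]
    have e3 : stdNormalCDF (-a + t) = stdNormalCDF (t - a) := by
      rw [show -a + t = t - a by ring]
    linarith

lemma gaussian_pointwise (σX σY z x V m s : ℝ) (hσX : 0 < σX) (hσY : 0 < σY)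
    (hV : V = σX ^ 2 + σY ^ 2) (hm : m = z * σY ^ 2 / V) (hs : s = σX * σY / Real.sqrt V) :
    Real.exp (-(z - x) ^ 2 / (2 * σX ^ 2)) / (σX * Real.sqrt (2 * Real.pi)) *
      (Real.exp (-x ^ 2 / (2 * σY ^ 2)) / (σY * Real.sqrt (2 * Real.pi))) =
    Real.exp (-z ^ 2 / (2 * V)) / (Real.sqrt V * Real.sqrt (2 * Real.pi)) *
      (stdφ ((x - m) / s) / s) := by
  have hVpos : 0 < V := by rw [hV]; positivity
  have hsqV : 0 < Real.sqrt V := Real.sqrt_pos.2 hVpos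
  have hsq2 : Real.sqrt V ^ 2 = V := Real.sq_sqrt hVpos.le
  have hspos : 0 < s := by rw [hs]; positivity
  have h2π : 0 < Real.sqrt (2 * Real.pi) := Real.sqrt_pos.2 (by positivity)
  unfold stdφ
  rw [div_mul_div_comm, ← Real.exp_add, div_div, div_mul_div_comm, ← Real.exp_add]
  have hKey : σX * Real.sqrt (2 * Real.pi) * (σY * Real.sqrt (2 * Real.pi)) =
      Real.sqrt V * Real.sqrt (2 * Real.pi) * (Real.sqrt (2 * Real.pi) * s) := by
    rw [hs]; field_simp
  rw [← hKey]
  congr 1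
  have hs2 : s ^ 2 = σX ^ 2 * σY ^ 2 / V := by
    rw [hs, div_pow, hsq2]; ring_nf
  rw [div_pow, hs2]
  rw [hm, hV] at *
  congr 1
  field_simp
  ring

lemma gaussian_ratio (σX σY z L V m s : ℝ) (hσX : 0 < σX) (hσY : 0 < σY)
    (hV : V = σX ^ 2 + σY ^ 2) (hm : m = z * σY ^ 2 / V) (hs : s = σX * σY / Real.sqrt V) :
    (∫ x in (-L)..L, Real.exp (-(z - x) ^ 2 / (2 * σX ^ 2)) / (σX * Real.sqrt (2 * Real.pi)) *
        (Real.exp (-x ^ 2 / (2 * σY ^ 2)) / (σY * Real.sqrt (2 * Real.pi)))) /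
      (∫ x : ℝ, Real.exp (-(z - x) ^ 2 / (2 * σX ^ 2)) / (σX * Real.sqrt (2 * Real.pi)) *
        (Real.exp (-x ^ 2 / (2 * σY ^ 2)) / (σY * Real.sqrt (2 * Real.pi)))) =
    stdNormalCDF (L / s - m / s) - stdNormalCDF ((-L) / s - m / s) := by
  have hVpos : 0 < V := by rw [hV]; positivity
  have hsqV : 0 < Real.sqrt V := Real.sqrt_pos.2 hVpos
  have hspos : 0 < s := by rw [hs]; positivity
  have hsne : s ≠ 0 := ne_of_gt hspos
  set D : ℝ := Real.exp (-z ^ 2 / (2 * V)) / (Real.sqrt V * Real.sqrt (2 * Real.pi)) with hD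
  have hDpos : 0 < D := by
    rw [hD]
    have : 0 < Real.sqrt (2 * Real.pi) := Real.sqrt_pos.2 (by positivity)
    positivity
  have key : ∀ x : ℝ, Real.exp (-(z - x) ^ 2 / (2 * σX ^ 2)) / (σX * Real.sqrt (2 * Real.pi)) *
      (Real.exp (-x ^ 2 / (2 * σY ^ 2)) / (σY * Real.sqrt (2 * Real.pi))) =
      D * (stdφ ((x - m) / s) / s) := fun x =>
    gaussian_pointwise σX σY z x V m s hσX hσY hV hm hs
  -- numerator
  have hnum : (∫ x in (-L)..L, Real.exp (-(z - x) ^ 2 / (2 * σX ^ 2)) /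
      (σX * Real.sqrt (2 * Real.pi)) *
      (Real.exp (-x ^ 2 / (2 * σY ^ 2)) / (σY * Real.sqrt (2 * Real.pi)))) =
      D * (stdNormalCDF (L / s - m / s) - stdNormalCDF ((-L) / s - m / s)) := by
    simp_rw [key]
    rw [intervalIntegral.integral_const_mul]
    congr 1
    have hdiv : ∀ x : ℝ, (x - m) / s = x / s - m / s := fun x => sub_div _ _ _
    simp_rw [hdiv]
    rw [intervalIntegral.integral_div, intervalIntegral.integral_comp_div_sub stdφ hsne (m / s)]
    rw [smul_eq_mul, ← stdNormalCDF_sub, mul_comm, mul_div_assoc, div_self hsne, mul_one]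
  -- denominator
  have hden : (∫ x : ℝ, Real.exp (-(z - x) ^ 2 / (2 * σX ^ 2)) /
      (σX * Real.sqrt (2 * Real.pi)) *
      (Real.exp (-x ^ 2 / (2 * σY ^ 2)) / (σY * Real.sqrt (2 * Real.pi)))) = D := by
    simp_rw [key]
    rw [MeasureTheory.integral_const_mul]
    have h1 : (∫ x : ℝ, stdφ ((x - m) / s) / s) = (∫ x : ℝ, stdφ ((x - m) / s)) / s :=
      integral_div _ _
    have h2 : (∫ x : ℝ, stdφ ((x - m) / s)) = ∫ x : ℝ, stdφ (x / s) := by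
      simp_rw [sub_eq_add_neg]
      exact MeasureTheory.integral_add_right_eq_self (fun y : ℝ => stdφ (y / s)) (-m)
    have h3 : (∫ x : ℝ, stdφ (x / s)) = s := by
      rw [MeasureTheory.Measure.integral_comp_div stdφ s, stdφ_integral, smul_eq_mul,
        mul_one, abs_of_pos hspos]
    rw [h1, h2, h3, div_self hsne, mul_one]
  rw [hnum, hden]
  exact mul_div_cancel_left₀ _ (ne_of_gt hDpos)

/-- Lemma 2: normal-normal obfuscation: with `g` the `N(0, σ_X²)`
density, `f` the `N(0, σ_Y²)` density, and
`M_{z,ε} = (∫_{-εσ_X}^{εσ_X} g(z-x)f(x) dx)/(∫_{-∞}^∞ g(z-x)f(x) dx)`, for every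
`δ ∈ (0,1)` the set `{ε > 0 : sup_z M_{z,ε} ≥ δ}` has a minimum, equal to
`μ = τ_{(1+δ)/2}/√(1 + σ_X²/σ_Y²)`, where `τ` is the `(1+δ)/2`-quantile of the
standard normal distribution (i.e. `Φ(τ) = (1+δ)/2`). -/
theorem normal_normal_confidentiality_measure (σX σY δ τ : ℝ)
    (hσX : 0 < σX) (hσY : 0 < σY) (hδ : δ ∈ Set.Ioo (0 : ℝ) 1)
    (hτ : stdNormalCDF τ = (1 + δ) / 2)
    (g f : ℝ → ℝ)
    (hg : ∀ x, g x = Real.exp (-x ^ 2 / (2 * σX ^ 2)) / (σX * Real.sqrt (2 * Real.pi)))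
    (hf : ∀ x, f x = Real.exp (-x ^ 2 / (2 * σY ^ 2)) / (σY * Real.sqrt (2 * Real.pi))) :
    IsLeast
      {ε : ℝ | 0 < ε ∧
        δ ≤ ⨆ z : ℝ,
          (∫ x in (-(ε * σX))..(ε * σX), g (z - x) * f x) /
            (∫ x : ℝ, g (z - x) * f x)}
      (τ / Real.sqrt (1 + σX ^ 2 / σY ^ 2)) := by
  obtain ⟨hδ0, hδ1⟩ := hδ
  set c := Real.sqrt (1 + σX ^ 2 / σY ^ 2) with hc
  set V : ℝ := σX ^ 2 + σY ^ 2 with hV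
  set s : ℝ := σX * σY / Real.sqrt V with hs
  have hVpos : 0 < V := by rw [hV]; positivity
  have hsqV : 0 < Real.sqrt V := Real.sqrt_pos.2 hVpos
  have hspos : 0 < s := by rw [hs]; positivity
  have hc_eq : c = Real.sqrt V / σY := by
    rw [hc, hV, show 1 + σX ^ 2 / σY ^ 2 = (σX ^ 2 + σY ^ 2) / σY ^ 2 by field_simp; ring,
      Real.sqrt_div (by positivity) _, Real.sqrt_sq hσY.le]
  have hcpos : 0 < c := by rw [hc_eq]; positivity
  have hσXs : σX / s = c := by
    rw [hs, hc_eq]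
    field_simp
  have hsup : ∀ ε : ℝ, 0 < ε →
      (⨆ z : ℝ, (∫ x in (-(ε * σX))..(ε * σX), g (z - x) * f x) /
        (∫ x : ℝ, g (z - x) * f x)) =
      stdNormalCDF (ε * c) - stdNormalCDF (-(ε * c)) := by
    intro ε hε
    have hεc : ε * σX / s = ε * c := by rw [mul_div_assoc, hσXs]
    have hratio : ∀ z : ℝ,
        (∫ x in (-(ε * σX))..(ε * σX), g (z - x) * f x) / (∫ x : ℝ, g (z - x) * f x) =
        stdNormalCDF (ε * σX / s - (z * σY ^ 2 / V) / s) -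
          stdNormalCDF ((-(ε * σX)) / s - (z * σY ^ 2 / V) / s) := by
      intro z
      simp only [hg, hf]
      exact gaussian_ratio σX σY z (ε * σX) V (z * σY ^ 2 / V) s hσX hσY hV rfl hs
    have ha : 0 ≤ ε * σX / s → True := fun _ => trivial
    have hbnd : ∀ z : ℝ,
        (∫ x in (-(ε * σX))..(ε * σX), g (z - x) * f x) / (∫ x : ℝ, g (z - x) * f x) ≤
        stdNormalCDF (ε * c) - stdNormalCDF (-(ε * c)) := by
      intro z
      rw [hratio z, neg_div, hεc]
      exact shift_le (ε * c) ((z * σY ^ 2 / V) / s)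
        (by rw [← hεc]; exact (div_pos (mul_pos hε hσX) hspos).le)
    have hzero :
        (∫ x in (-(ε * σX))..(ε * σX), g ((0:ℝ) - x) * f x) / (∫ x : ℝ, g ((0:ℝ) - x) * f x) =
        stdNormalCDF (ε * c) - stdNormalCDF (-(ε * c)) := by
      rw [hratio 0]
      norm_num [neg_div, hεc]
    apply le_antisymm
    · exact ciSup_le hbnd
    · have hb : BddAbove (Set.range fun z : ℝ =>
          (∫ x in (-(ε * σX))..(ε * σX), g (z - x) * f x) / (∫ x : ℝ, g (z - x) * f x)) := by
        refine ⟨stdNormalCDF (ε * c) - stdNormalCDF (-(ε * c)), ?_⟩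
        rintro _ ⟨z, rfl⟩
        exact hbnd z
      have := le_ciSup hb (0 : ℝ)
      rwa [hzero] at this
  have hτpos : 0 < τ := by
    by_contra h
    push_neg at h
    have := stdNormalCDF_strictMono.monotone h
    rw [hτ, stdNormalCDF_zero] at this
    linarith
  constructor
  · refine ⟨div_pos hτpos hcpos, ?_⟩
    rw [hsup (τ / c) (div_pos hτpos hcpos), div_mul_cancel₀ τ (ne_of_gt hcpos), stdNormalCDF_neg, hτ]
    linarith
  · rintro ε ⟨hε, hle⟩
    rw [hsup ε hε, stdNormalCDF_neg] at hle
    have h2 : τ ≤ ε * c := by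
      by_contra h
      push_neg at h
      have := stdNormalCDF_strictMono h
      rw [hτ] at this
      linarith
    exact (div_le_iff₀ hcpos).2 h2
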